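/- arXiv:2411.08233 — 3 statements merged into one kernel-verified Lean document; each statement's English description precedes it below -/
import Mathlib

section
/- For every n ≥ 1, the supercomposite code A_n (defined by A_1 = [0;1] and A_{n+1} = [0...0; A_n|1; reverse(A_n')|0]) is a complete 3-skew-tolerant binary Gray code: its cyclic transition sequence δ_0,...,δ_{2^n−1} satisfies |δ_i − δ_{i+1}| ≤ 3 for all i modulo 2^n. -/
/-- Codewords `c` and `d` differ exactly at coordinate `i` (1-based), by `±1` there. -/
def TransAt {m : ℕ} (c d : List (ZMod m)) (i : ℕ) : Prop :=
  1 ≤ i ∧ i ≤ c.length ∧ c.length = d.length ∧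
  c.take (i-1) = d.take (i-1) ∧ c.drop i = d.drop i ∧
  (d.getD (i-1) 0 = c.getD (i-1) 0 + 1 ∨ d.getD (i-1) 0 = c.getD (i-1) 0 - 1)

/-- `C` is a cyclic Gray code with transition sequence `δ`. -/
def CyclicGrayWith {m : ℕ} (C : List (List (ZMod m))) (δ : ℕ → ℕ) : Prop :=
  C.Nodup ∧ ∀ i < C.length,
    TransAt (C.getD i []) (C.getD ((i+1) % C.length) []) (δ i)

/-- cyclic `k`-skew-tolerance of a transition sequence. -/
def SkewCyc (P : ℕ) (δ : ℕ → ℕ) (k : ℤ) : Prop :=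
  ∀ i < P, |(δ i : ℤ) - (δ ((i+1) % P) : ℤ)| ≤ k

/-- Construction 1: `A 1 = [0;1]`,
`A (n+1) = [0…0 ; A n with 1 appended ; reverse of (A n minus first word) with 0 appended]`. -/
def grayA : ℕ → List (List (ZMod 2))
  | 0 => []
  | 1 => [[0], [1]]
  | (n+2) => List.replicate (n+2) (0 : ZMod 2) ::
      ((grayA (n+1)).map (· ++ [1]) ++ (grayA (n+1)).tail.reverse.map (· ++ [0]))

/-!
Moving the all-zero word of `A_{n+1}` from the front to the back turns it into the reflected code
`A_n|1, reverse(A_n)|0`. Hence `A_{n+1}` is a permutation of `A_n|1 ++ A_n|0`, and its transition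
sequence is `n+1, δ_0, …, δ_{2^n-2}, n+1, δ_{2^n-2}, …, δ_0`, where `δ` is the cyclic transition
sequence of `A_n`. Inside the two blocks the skew bound is inherited from `A_n`; the four junctions
compare `n+1` with `δ_0 = n` and with `δ_{2^n-2}`, which the recursion identifies with `δ_1` of
`A_{n-1}`, i.e. `n-2` (for `n ≥ 3`). So no jump exceeds 3.
-/

section TransAt

variable {m : ℕ} {c d : List (ZMod m)} {i : ℕ}

theorem TransAt.symm (h : TransAt c d i) : TransAt d c i := by
  obtain ⟨hi1, hic, hlen, htake, hdrop, hstep⟩ := h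
  refine ⟨hi1, hlen ▸ hic, hlen.symm, htake.symm, hdrop.symm, ?_⟩
  rcases hstep with h | h <;> [right; left] <;> rw [h] <;> ring

theorem TransAt.append (h : TransAt c d i) (b : ZMod m) : TransAt (c ++ [b]) (d ++ [b]) i := by
  obtain ⟨hi1, hic, hlen, htake, hdrop, hstep⟩ := h
  refine ⟨hi1, by simp; omega, by simp [hlen], ?_, ?_, ?_⟩
  · rw [List.take_append_of_le_length (by omega), List.take_append_of_le_length (by omega), htake]
  · rw [List.drop_append_of_le_length hic, List.drop_append_of_le_length (by omega), hdrop]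
  · rwa [List.getD_append _ _ _ _ (by omega), List.getD_append _ _ _ _ (by omega)]

theorem transAt_append_singleton (c : List (ZMod m)) {b b' : ZMod m}
    (h : b' = b + 1 ∨ b' = b - 1) : TransAt (c ++ [b]) (c ++ [b']) (c.length + 1) :=
  ⟨by omega, by simp, by simp, by simp, by simp, by simpa using h⟩

end TransAt

theorem grayA_succ_eq_cons (n : ℕ) :
    grayA (n + 1) = List.replicate (n + 1) 0 :: (grayA (n + 1)).tail := by
  cases n <;> rfl

open List in
theorem grayA_add_two_perm (n : ℕ) :
    (grayA (n + 2)).Perm ((grayA (n + 1)).map (· ++ [1]) ++ (grayA (n + 1)).map (· ++ [0])) := by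
  set A := grayA (n + 1)
  have hA : A = List.replicate (n + 1) 0 :: A.tail := grayA_succ_eq_cons n
  calc grayA (n + 2) = (List.replicate (n + 1) 0 ++ [0]) ::
        (A.map (· ++ [1]) ++ A.tail.reverse.map (· ++ [0])) := by
          rw [grayA, ← List.replicate_succ']
    _ ~ A.map (· ++ [1]) ++ (List.replicate (n + 1) 0 :: A.tail.reverse).map (· ++ [0]) :=
          List.perm_middle.symm
    _ ~ A.map (· ++ [1]) ++ A.map (· ++ [0]) := by
          refine .append_left _ (.map _ ?_)
          rw [hA]
          exact (List.reverse_perm _).cons _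

theorem length_of_mem_grayA : ∀ {n : ℕ} {c : List (ZMod 2)}, c ∈ grayA n → c.length = n
  | 0, _, h => by simp [grayA] at h
  | 1, _, h => by
    simp only [grayA, List.mem_cons, List.not_mem_nil, or_false] at h
    rcases h with rfl | rfl <;> rfl
  | n + 2, c, h => by
    rcases List.mem_append.mp ((grayA_add_two_perm n).mem_iff.mp h) with h | h <;>
    · obtain ⟨a, ha, rfl⟩ := List.mem_map.mp h
      simp [length_of_mem_grayA ha]

theorem length_grayA (n : ℕ) : (grayA (n + 1)).length = 2 ^ (n + 1) := by
  induction n with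
  | zero => rfl
  | succ n ih => simp [(grayA_add_two_perm n).length_eq, ih, pow_succ, mul_two]

theorem nodup_grayA : ∀ n : ℕ, (grayA n).Nodup
  | 0 => List.nodup_nil
  | 1 => by decide
  | n + 2 => by
    refine (grayA_add_two_perm n).nodup_iff.mpr (List.nodup_append.mpr ⟨?_, ?_, ?_⟩)
    · exact (nodup_grayA _).map (List.append_left_injective _)
    · exact (nodup_grayA _).map (List.append_left_injective _)
    · simp only [List.mem_map]
      rintro _ ⟨a, -, rfl⟩ _ ⟨b, -, rfl⟩ h
      simpa using (List.append_inj' h rfl).2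

theorem getD_grayA_zero (n : ℕ) : (grayA (n + 1)).getD 0 [] = List.replicate (n + 1) 0 := by
  rw [grayA_succ_eq_cons, List.getD_cons_zero]

theorem length_getD_grayA {n i : ℕ} (hi : i < 2 ^ (n + 1)) :
    ((grayA (n + 1)).getD i []).length = n + 1 := by
  rw [List.getD_eq_getElem _ _ (by rwa [length_grayA])]
  exact length_of_mem_grayA (List.getElem_mem _)

theorem getD_grayA_add_two_of_le {n i : ℕ} (hi : 0 < i) (hiQ : i ≤ 2 ^ (n + 1)) :
    (grayA (n + 2)).getD i [] = (grayA (n + 1)).getD (i - 1) [] ++ [1] := by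
  obtain ⟨j, rfl⟩ : ∃ j, i = j + 1 := ⟨i - 1, by omega⟩
  have hj : j < (grayA (n + 1)).length := by rw [length_grayA]; omega
  simp [grayA.eq_3, List.getD_eq_getElem?_getD, List.getElem?_append_left, hj]

-- Stated modulo `2 ^ (n + 2)` so that `i = 2 ^ (n + 2)` covers the wrap-around to the first word.
theorem getD_grayA_add_two_mod_of_lt {n i : ℕ} (hQi : 2 ^ (n + 1) < i) (hi : i ≤ 2 ^ (n + 2)) :
    (grayA (n + 2)).getD (i % 2 ^ (n + 2)) [] =
      (grayA (n + 1)).getD (2 ^ (n + 2) - i) [] ++ [0] := by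
  have hlen := length_grayA n
  have hP : 2 ^ (n + 2) = 2 * 2 ^ (n + 1) := pow_succ' 2 (n + 1)
  rcases hi.eq_or_lt with rfl | hi
  · rw [Nat.mod_self, Nat.sub_self, getD_grayA_zero, getD_grayA_zero, List.replicate_succ']
  obtain ⟨j, rfl⟩ : ∃ j, i = j + 1 := ⟨i - 1, by omega⟩
  simp only [Nat.mod_eq_of_lt hi, grayA.eq_3, List.getD_eq_getElem?_getD, List.getElem?_cons_succ]
  rw [List.getElem?_append_right (by simp; omega), List.length_map, hlen, List.getElem?_map,
    List.getElem?_reverse (by simp [hlen]; omega),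
    List.getElem?_tail, List.length_tail, hlen,
    show 2 ^ (n + 1) - 1 - 1 - (j - 2 ^ (n + 1)) + 1 = 2 ^ (n + 2) - (j + 1) by omega,
    List.getElem?_eq_getElem (by omega)]
  rfl

def deltaA : ℕ → ℕ → ℕ
  | 0, _ => 0
  | 1, _ => 1
  | n + 2, i =>
    if i = 0 ∨ i = 2 ^ (n + 1) then n + 2
    else if i < 2 ^ (n + 1) then deltaA (n + 1) (i - 1)
    else deltaA (n + 1) (2 ^ (n + 2) - 1 - i)

section deltaA

variable {n i : ℕ}

theorem deltaA_add_two_zero : deltaA (n + 2) 0 = n + 2 := by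
  simp [deltaA]

theorem deltaA_add_two_two_pow : deltaA (n + 2) (2 ^ (n + 1)) = n + 2 := by
  simp [deltaA]

theorem deltaA_add_two_of_lt (hi : 0 < i) (hiQ : i < 2 ^ (n + 1)) :
    deltaA (n + 2) i = deltaA (n + 1) (i - 1) := by
  simp [deltaA, hi.ne', hiQ.ne, hiQ]

theorem deltaA_add_two_of_gt (hQi : 2 ^ (n + 1) < i) :
    deltaA (n + 2) i = deltaA (n + 1) (2 ^ (n + 2) - 1 - i) := by
  simp [deltaA, (Nat.zero_lt_of_lt hQi).ne', hQi.ne', hQi.asymm]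

end deltaA

theorem transAt_grayA (n : ℕ) : ∀ i < 2 ^ (n + 1), TransAt ((grayA (n + 1)).getD i [])
    ((grayA (n + 1)).getD ((i + 1) % 2 ^ (n + 1)) []) (deltaA (n + 1) i) := by
  induction n with
  | zero =>
    intro i hi
    interval_cases i <;> (unfold TransAt; decide)
  | succ n ih =>
    show ∀ i < 2 ^ (n + 2), TransAt ((grayA (n + 2)).getD i [])
      ((grayA (n + 2)).getD ((i + 1) % 2 ^ (n + 2)) []) (deltaA (n + 2) i)
    intro i hi
    have hP : 2 ^ (n + 2) = 2 * 2 ^ (n + 1) := pow_succ' 2 (n + 1)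
    have step (k : ℕ) (hk : k + 1 < 2 ^ (n + 1)) : TransAt ((grayA (n + 1)).getD k [])
        ((grayA (n + 1)).getD (k + 1) []) (deltaA (n + 1) k) := by
      simpa [Nat.mod_eq_of_lt hk] using ih k (by omega)
    rcases Nat.lt_trichotomy i (2 ^ (n + 1)) with hiQ | rfl | hQi
    · rw [Nat.mod_eq_of_lt (by omega), getD_grayA_add_two_of_le (i := i + 1) (by omega) (by omega),
        Nat.add_sub_cancel]
      rcases i.eq_zero_or_pos with rfl | hi0
      · rw [getD_grayA_zero, deltaA_add_two_zero, getD_grayA_zero, List.replicate_succ']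
        simpa using transAt_append_singleton (List.replicate (n + 1) (0 : ZMod 2))
          (b := 0) (b' := 1) (by decide)
      · rw [getD_grayA_add_two_of_le hi0 hiQ.le, deltaA_add_two_of_lt hi0 hiQ]
        have := step (i - 1) (by omega)
        rw [Nat.sub_add_cancel hi0] at this
        exact this.append 1
    · rw [getD_grayA_add_two_of_le (by omega) le_rfl,
        getD_grayA_add_two_mod_of_lt (by omega) (by omega),
        show 2 ^ (n + 2) - (2 ^ (n + 1) + 1) = 2 ^ (n + 1) - 1 by omega, deltaA_add_two_two_pow]
      have := transAt_append_singleton ((grayA (n + 1)).getD (2 ^ (n + 1) - 1) [])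
        (b := 1) (b' := 0) (by decide)
      rwa [length_getD_grayA (by omega)] at this
    · have hcur := getD_grayA_add_two_mod_of_lt hQi hi.le
      rw [Nat.mod_eq_of_lt hi] at hcur
      rw [hcur, getD_grayA_add_two_mod_of_lt (i := i + 1) (by omega) (by omega),
        deltaA_add_two_of_gt hQi, show 2 ^ (n + 2) - 1 - i = 2 ^ (n + 2) - (i + 1) by omega]
      have := step (2 ^ (n + 2) - (i + 1)) (by omega)
      rw [show 2 ^ (n + 2) - (i + 1) + 1 = 2 ^ (n + 2) - i by omega] at this
      exact this.symm.append 0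

theorem deltaA_zero (n : ℕ) : deltaA (n + 1) 0 = n + 1 := by
  cases n <;> simp [deltaA]

theorem deltaA_le (n i : ℕ) : deltaA (n + 1) i ≤ n + 1 := by
  induction n generalizing i with
  | zero => simp [deltaA]
  | succ n ih =>
    rw [deltaA]
    split_ifs
    exacts [le_rfl, (ih _).trans n.succ.le_succ, (ih _).trans n.succ.le_succ]

theorem le_deltaA_one (n : ℕ) : n ≤ deltaA (n + 1) 1 := by
  cases n with
  | zero => exact Nat.zero_le _
  | succ n =>
    rw [deltaA_add_two_of_lt one_pos (Nat.one_lt_two_pow (by omega)), Nat.sub_self, deltaA_zero]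

theorem le_deltaA_two_pow_sub_two (n : ℕ) : n ≤ deltaA (n + 1) (2 ^ (n + 1) - 2) + 1 := by
  cases n with
  | zero => exact Nat.zero_le _
  | succ n =>
    have hP : 2 ^ (n + 2) = 2 * 2 ^ (n + 1) := pow_succ' 2 (n + 1)
    rcases (show 2 ^ (n + 1) ≤ 2 ^ (n + 2) - 2 by omega).eq_or_lt with h | h
    · rw [← h, deltaA_add_two_two_pow]
      omega
    · rw [deltaA_add_two_of_gt h, show 2 ^ (n + 2) - 1 - (2 ^ (n + 2) - 2) = 1 by omega]
      exact Nat.succ_le_succ (le_deltaA_one n)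

theorem abs_sub_deltaA_two_pow_sub_two_le (n : ℕ) :
    |(n + 2 : ℤ) - deltaA (n + 1) (2 ^ (n + 1) - 2)| ≤ 3 := by
  have := le_deltaA_two_pow_sub_two n
  have := deltaA_le n (2 ^ (n + 1) - 2)
  rw [abs_le]
  constructor <;> omega

theorem abs_deltaA_sub_le (n : ℕ) : ∀ i < 2 ^ (n + 1),
    |(deltaA (n + 1) i : ℤ) - deltaA (n + 1) ((i + 1) % 2 ^ (n + 1))| ≤ 3 := by
  induction n with
  | zero =>
    intro i hi
    interval_cases i <;> simp [deltaA]
  | succ n ih =>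
    show ∀ i < 2 ^ (n + 2),
      |(deltaA (n + 2) i : ℤ) - deltaA (n + 2) ((i + 1) % 2 ^ (n + 2))| ≤ 3
    intro i hi
    have hP : 2 ^ (n + 2) = 2 * 2 ^ (n + 1) := pow_succ' 2 (n + 1)
    have step (k : ℕ) (hk : k + 1 < 2 ^ (n + 1)) :
        |(deltaA (n + 1) k : ℤ) - deltaA (n + 1) (k + 1)| ≤ 3 := by
      simpa [Nat.mod_eq_of_lt hk] using ih k (by omega)
    rcases (show i + 1 < 2 ^ (n + 2) ∨ i + 1 = 2 ^ (n + 2) by omega) with hi' | hi'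
    swap
    · rw [hi', Nat.mod_self, deltaA_add_two_of_gt (by omega),
        show 2 ^ (n + 2) - 1 - i = 0 by omega, deltaA_zero, deltaA_add_two_zero]
      norm_num
    rw [Nat.mod_eq_of_lt hi']
    rcases Nat.lt_trichotomy (i + 1) (2 ^ (n + 1)) with hiQ | hiQ | hQi
    · rcases i.eq_zero_or_pos with rfl | hi0
      · rw [deltaA_add_two_zero, zero_add, deltaA_add_two_of_lt one_pos hiQ, Nat.sub_self,
          deltaA_zero]
        norm_num
      · rw [deltaA_add_two_of_lt hi0 (by omega), deltaA_add_two_of_lt (by omega) hiQ]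
        simpa [Nat.sub_add_cancel hi0] using step (i - 1) (by omega)
    · rw [hiQ, deltaA_add_two_two_pow, deltaA_add_two_of_lt (by omega) (by omega),
        show i - 1 = 2 ^ (n + 1) - 2 by omega, abs_sub_comm]
      exact abs_sub_deltaA_two_pow_sub_two_le n
    rcases (show i = 2 ^ (n + 1) ∨ 2 ^ (n + 1) < i by omega) with rfl | hQi
    · rw [deltaA_add_two_two_pow, deltaA_add_two_of_gt (by omega),
        show 2 ^ (n + 2) - 1 - (2 ^ (n + 1) + 1) = 2 ^ (n + 1) - 2 by omega]
      exact abs_sub_deltaA_two_pow_sub_two_le n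
    · rw [deltaA_add_two_of_gt hQi, deltaA_add_two_of_gt (by omega), abs_sub_comm,
        show 2 ^ (n + 2) - 1 - i = 2 ^ (n + 2) - 1 - (i + 1) + 1 by omega]
      exact step _ (by omega)

theorem stmt2 : ∀ n : ℕ, 1 ≤ n →
    (∀ c ∈ grayA n, c.length = n) ∧ (grayA n).length = 2 ^ n ∧
    ∃ δ : ℕ → ℕ, CyclicGrayWith (grayA n) δ ∧ SkewCyc (grayA n).length δ 3 := by
  intro n hn
  obtain ⟨n, rfl⟩ := Nat.exists_eq_add_of_le' hn
  refine ⟨fun _ => length_of_mem_grayA, length_grayA n, deltaA (n + 1),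
    ⟨nodup_grayA _, ?_⟩, ?_⟩ <;> rw [length_grayA]
  exacts [transAt_grayA n, abs_deltaA_sub_le n]
end

section
/- For every n ≥ 1, the code A_n of Construction 1 begins with the list 0...000, 0...001, 0...011, ..., 1...111 (the i-th codeword having its last i−1 coordinates equal to 1 and the rest 0) and ends with the list 11...110, 011...110, 001...110, ..., 000...010. -/
/-- The `n+1` initial codewords `0…000, 0…001, 0…011, …, 1…111`. -/
def startList (n : ℕ) : List (List (ZMod 2)) :=
  (List.range (n+1)).map (fun j => List.replicate (n-j) (0 : ZMod 2) ++ List.replicate j 1)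

/-- The `n-1` final codewords `11…110, 011…110, …, 000…010`. -/
def endList (n : ℕ) : List (List (ZMod 2)) :=
  (List.range (n-1)).map
    (fun j => List.replicate j (0 : ZMod 2) ++ List.replicate (n-1-j) 1 ++ [0])

/-!
By induction, the initial run `0…0, 0…01, …, 1…1` of `A n` is carried, with a `1` appended, into the
`A n ++ [1]` block of `A (n+1)`, and the new all-zero word completes the run. The same run, minus its
first word, reversed and with a `0` appended, is exactly the final run `1…10, 01…10, …, 0…010` of
`A (n+1)`, because the last block of `A (n+1)` is `(A n).tail.reverse` with a `0` appended.
-/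

lemma startList_succ (n : ℕ) :
    startList (n + 1) = List.replicate (n + 1) (0 : ZMod 2) :: (startList n).map (· ++ [1]) := by
  rw [startList, List.range_succ_eq_map, List.map_cons, List.map_map, startList, List.map_map]
  congr 1
  · simp
  · refine List.map_congr_left fun j _ => ?_
    simp [List.replicate_succ' (n := j)]

lemma endList_succ (n : ℕ) :
    endList (n + 1) = (startList n).tail.reverse.map (· ++ [0]) := by
  refine List.ext_getElem (by simp [endList, startList]) fun i h _ => ?_
  have hi : i < n := by simpa [endList] using h
  simp only [endList, startList, List.getElem_map, List.getElem_reverse, List.getElem_tail,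
    List.getElem_range, List.length_tail, List.length_map, List.length_range, List.append_assoc]
  rw [show n + 1 - 1 - i = n - i by omega, show n + 1 - 1 - 1 - i + 1 = n - i by omega,
    show n - (n - i) = i by omega]

lemma startList_prefix_grayA {n : ℕ} (hn : 1 ≤ n) : startList n <+: grayA n := by
  induction n, hn using Nat.le_induction with
  | base => decide
  | succ n hn ih =>
    obtain ⟨k, rfl⟩ := Nat.exists_eq_add_of_le' hn
    rw [startList_succ, grayA]
    exact List.cons_prefix_cons.mpr ⟨rfl, (ih.map _).trans (List.prefix_append _ _)⟩

lemma endList_suffix_grayA (n : ℕ) : endList n <:+ grayA n := by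
  match n with
  | 0 | 1 => exact List.nil_suffix
  | k + 2 =>
    have hstart := startList_prefix_grayA (Nat.le_add_left 1 k)
    have htail : (startList (k + 1)).tail <+: (grayA (k + 1)).tail := by
      simpa only [List.drop_one] using hstart.drop 1
    rw [endList_succ, grayA]
    exact ((htail.reverse.map _).trans (List.suffix_append _ _)).trans (List.suffix_cons _ _)

theorem stmt3 :
    (∀ n : ℕ, 1 ≤ n → startList n <+: grayA n) ∧
    (∀ n : ℕ, 3 ≤ n → endList n <:+ grayA n) :=
  ⟨fun _ hn => startList_prefix_grayA hn, fun n _ => endList_suffix_grayA n⟩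
end

section
/- Let B be a complete cyclic 2-skew-tolerant binary Gray code of length 2n, and let φ: (Z/2)^{2n} → (Z/4)^n be the map applying φ(00)=0, φ(01)=1, φ(11)=2, φ(10)=3 to each consecutive non-overlapping pair of bits. Then φ(B) is a complete cyclic quaternary 1-skew-tolerant Gray code of length n: its 4^n codewords are distinct, cyclically consecutive codewords differ by ±1 (mod 4) in exactly one coordinate, and cyclically consecutive transition positions differ by at most 1. -/
/-- The 2-bit reflected Gray code labeling: `00↦0, 01↦1, 11↦2, 10↦3`. -/
def phi (a b : ZMod 2) : ZMod 4 :=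
  if a = 0 then (if b = 0 then 0 else 1) else (if b = 0 then 3 else 2)

/-- Apply `phi` to consecutive non-overlapping pairs of bits. -/
def phiL : List (ZMod 2) → List (ZMod 4)
  | a :: b :: rest => phi a b :: phiL rest
  | _ => []


/-!
`phi` is the 2-bit reflected Gray code: a bijection `(ZMod 2)² → ZMod 4` under which flipping
either bit moves the value by `±1`. Hence a binary transition at bit position `k` becomes a
quaternary transition at pair position `⌈k/2⌉ = (k + 1) / 2`, the image of `B` is a complete
code because `phiL` is inverted pairwise, and halving turns transition positions that are at
most 2 apart into ones at most 1 apart.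
-/

theorem transAt_iff {m : ℕ} {c d : List (ZMod m)} {i : ℕ} :
    TransAt c d i ↔ ∃ U V : List (ZMod m), ∃ x y : ZMod m,
      c = U ++ x :: V ∧ d = U ++ y :: V ∧ i = U.length + 1 ∧ (y = x + 1 ∨ y = x - 1) := by
  constructor
  · rintro ⟨hi, hic, hlen, htake, hdrop, hxy⟩
    obtain ⟨j, rfl⟩ : ∃ j, i = j + 1 := ⟨i - 1, by omega⟩
    have split {l : List (ZMod m)} (hl : j < l.length) :
        l = l.take j ++ l.getD j 0 :: l.drop (j + 1) := by
      rw [List.getD_eq_getElem _ _ hl, ← List.drop_eq_getElem_cons hl, List.take_append_drop]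
    simp only [Nat.add_sub_cancel] at htake hxy
    refine ⟨c.take j, c.drop (j + 1), _, _, split (by omega), ?_, ?_, hxy⟩
    · rw [htake, hdrop]; exact split (by omega)
    · rw [List.length_take]; omega
  · rintro ⟨U, V, x, y, rfl, rfl, rfl, hxy⟩
    refine ⟨by omega, by simp, by simp, by simp, ?_, by simpa⟩
    simp [List.drop_append]

theorem phiL_length : ∀ l : List (ZMod 2), (phiL l).length = l.length / 2
  | [] => rfl
  | [_] => by simp [phiL]
  | _ :: _ :: r => by simp [phiL, phiL_length r]; omega

theorem phiL_append : ∀ u v : List (ZMod 2), Even u.length → phiL (u ++ v) = phiL u ++ phiL v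
  | [], _, _ => rfl
  | [_], _, h => by simp at h
  | a :: b :: r, v, h => by
    simp only [List.cons_append, phiL, phiL_append r v (by simpa [parity_simps] using h)]

def psi (x : ZMod 4) : ZMod 2 × ZMod 2 :=
  if x = 0 then (0, 0) else if x = 1 then (0, 1) else if x = 2 then (1, 1) else (1, 0)

def psiL : List (ZMod 4) → List (ZMod 2)
  | [] => []
  | x :: r => (psi x).1 :: (psi x).2 :: psiL r

theorem phi_psi : ∀ x : ZMod 4, phi (psi x).1 (psi x).2 = x := by decide

theorem psi_phi : ∀ a b : ZMod 2, psi (phi a b) = (a, b) := by decide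

theorem psiL_length : ∀ d : List (ZMod 4), (psiL d).length = 2 * d.length
  | [] => rfl
  | _ :: r => by simp [psiL, psiL_length r]; omega

theorem phiL_psiL : ∀ d : List (ZMod 4), phiL (psiL d) = d
  | [] => rfl
  | x :: r => by simp [psiL, phiL, phi_psi, phiL_psiL r]

theorem psiL_phiL : ∀ l : List (ZMod 2), Even l.length → psiL (phiL l) = l
  | [], _ => rfl
  | [_], h => by simp at h
  | a :: b :: r, h => by
    simp [phiL, psiL, psi_phi, psiL_phiL r (by simpa [parity_simps] using h)]

theorem phiL_injOn_even : Set.InjOn phiL {l | Even l.length} := fun x hx y hy hxy => by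
  rw [← psiL_phiL x hx, ← psiL_phiL y hy, hxy]

theorem phi_succ_or_pred_left : ∀ a a' b : ZMod 2, (a' = a + 1 ∨ a' = a - 1) →
    (phi a' b = phi a b + 1 ∨ phi a' b = phi a b - 1) := by decide

theorem phi_succ_or_pred_right : ∀ a b b' : ZMod 2, (b' = b + 1 ∨ b' = b - 1) →
    (phi a b' = phi a b + 1 ∨ phi a b' = phi a b - 1) := by decide

theorem transAt_phiL {c d : List (ZMod 2)} {i : ℕ} (hc : Even c.length) (h : TransAt c d i) :
    TransAt (phiL c) (phiL d) ((i + 1) / 2) := by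
  obtain ⟨U, V, x, y, rfl, rfl, rfl, hxy⟩ := transAt_iff.mp h
  rw [transAt_iff]
  rcases Nat.even_or_odd U.length with hU | hU
  · obtain ⟨b, V, rfl⟩ : ∃ b V', V = b :: V' := by
      cases V with
      | nil => simp [parity_simps, hU] at hc
      | cons b V' => exact ⟨b, V', rfl⟩
    refine ⟨phiL U, phiL V, phi x b, phi y b, phiL_append _ _ hU, phiL_append _ _ hU, ?_,
      phi_succ_or_pred_left x y b hxy⟩
    rw [phiL_length]; omega
  · obtain ⟨U, a, rfl⟩ := (List.eq_nil_or_concat' U).resolve_left (by rintro rfl; simp at hU)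
    have hU' : Even U.length := by simpa [parity_simps] using hU
    refine ⟨phiL U, phiL V, phi a x, phi a y, ?_, ?_, ?_, phi_succ_or_pred_right a x y hxy⟩
    · simp [phiL_append _ _ hU', phiL]
    · simp [phiL_append _ _ hU', phiL]
    · obtain ⟨k, hk⟩ := hU'
      simp [phiL_length]; omega

theorem abs_half_sub_half_le_one {a b : ℕ} (h : |(a : ℤ) - b| ≤ 2) :
    |(((a + 1) / 2 : ℕ) : ℤ) - ((b + 1) / 2 : ℕ)| ≤ 1 := by
  rw [abs_le] at h ⊢; omega

theorem stmt15 : ∀ n : ℕ, 1 ≤ n → ∀ B : List (List (ZMod 2)),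
    (∀ c ∈ B, c.length = 2*n) → B.length = 2 ^ (2*n) → B.Nodup →
    (∀ c : List (ZMod 2), c.length = 2*n → c ∈ B) →
    (∃ δ : ℕ → ℕ, (∀ i < B.length,
        TransAt (B.getD i []) (B.getD ((i+1) % B.length) []) (δ i)) ∧
      SkewCyc B.length δ 2) →
    (B.map phiL).Nodup ∧ (B.map phiL).length = 4 ^ n ∧
    (∀ c ∈ B.map phiL, c.length = n) ∧
    (∀ c : List (ZMod 4), c.length = n → c ∈ B.map phiL) ∧
    ∃ δ' : ℕ → ℕ, CyclicGrayWith (B.map phiL) δ' ∧ SkewCyc (B.map phiL).length δ' 1 := by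
  intro n _ B hlen hcard hnodup hcomplete ⟨δ, hδ, hskew⟩
  have heven : ∀ c ∈ B, Even c.length := fun c hc => ⟨n, by rw [hlen c hc]; ring⟩
  have hnodup' : (B.map phiL).Nodup :=
    hnodup.map_on fun x hx y hy => phiL_injOn_even (heven x hx) (heven y hy)
  have hget (j : ℕ) : (B.map phiL).getD j [] = phiL (B.getD j []) := B.getD_map [] phiL
  refine ⟨hnodup', by simp [hcard, pow_mul], ?_, ?_, fun k => (δ k + 1) / 2, ⟨hnodup', ?_⟩, ?_⟩
  · simp only [List.forall_mem_map, phiL_length]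
    intro c hc; rw [hlen c hc]; omega
  · exact fun c hc => List.mem_map.mpr ⟨psiL c, hcomplete _ (by simp [psiL_length, hc]), phiL_psiL c⟩
  · intro i hi
    rw [List.length_map] at hi ⊢
    rw [hget, hget]
    exact transAt_phiL (heven _ (List.getD_eq_getElem _ _ hi ▸ List.getElem_mem hi)) (hδ i hi)
  · intro i hi
    rw [List.length_map] at hi ⊢
    exact abs_half_sub_half_le_one (hskew i hi)
end
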